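/- Let H₁ and H₂ be real Hilbert spaces, K : H₁ → H₂ a continuous linear operator, f ∈ H₂ nonzero, and suppose (γ_j, v_j, β_j, p_j)_{j≥1} is a non-terminating Golub–Kahan bidiagonalization (GKB) process for (K, f). For k ≥ 1 let G_k be the (k+1)×k real lower bidiagonal matrix with entries G_k(j,j) = β_j for 1 ≤ j ≤ k, G_k(j+1,j) = γ_{j+1} for 1 ≤ j ≤ k, and all other entries zero, and let e₁ ∈ ℝ^{k+1} be the first standard basis vector. Then for every λ = (λ₁, …, λ_k) ∈ ℝ^k, ‖K(Σ_{j=1}^k λ_j p_j) − f‖ (norm in H₂) equals the Euclidean norm ‖G_k λ − γ₁ e₁‖₂ in ℝ^{k+1}. -/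

import Mathlib

open ContinuousLinearMap

/-- A non-terminating Golub–Kahan bidiagonalization (GKB) process for `(K, f)`.
Index `j : ℕ` corresponds to the `(j+1)`-st element of the process in the paper
(i.e. `γ 0 = γ₁`, `v 0 = v₁`, etc.). All coefficients are strictly positive. -/
structure GKB {H₁ H₂ : Type*}
    [NormedAddCommGroup H₁] [InnerProductSpace ℝ H₁] [CompleteSpace H₁]
    [NormedAddCommGroup H₂] [InnerProductSpace ℝ H₂] [CompleteSpace H₂]
    (K : H₁ →L[ℝ] H₂) (f : H₂)
    (γ β : ℕ → ℝ) (v : ℕ → H₂) (p : ℕ → H₁) : Prop where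
  γ_pos : ∀ j, 0 < γ j
  β_pos : ∀ j, 0 < β j
  γ_zero : γ 0 = ‖f‖
  v_zero : γ 0 • v 0 = f
  β_zero : β 0 = ‖adjoint K (v 0)‖
  p_zero : β 0 • p 0 = adjoint K (v 0)
  γ_succ : ∀ j, γ (j + 1) = ‖K (p j) - β j • v j‖
  v_succ : ∀ j, γ (j + 1) • v (j + 1) = K (p j) - β j • v j
  β_succ : ∀ j, β (j + 1) = ‖adjoint K (v (j + 1)) - γ (j + 1) • p j‖
  p_succ : ∀ j, β (j + 1) • p (j + 1) = adjoint K (v (j + 1)) - γ (j + 1) • p j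


/-!
The recurrences say `K p_j = β_j v_j + γ_{j+1} v_{j+1}` and `f = γ₁ v₁`, i.e. `K P_k = V_{k+1} G_k`
and `f = γ₁ V_{k+1} e₁` with `V_{k+1} c = Σ c_i v_i`. Hence `K (P_k λ) - f = V_{k+1} (G_k λ - γ₁ e₁)`,
and `V_{k+1}` is an isometry from Euclidean space because the `v_j` are orthonormal. Orthonormality
of the `v_j` is proved jointly with that of the `p_j`, by induction, pairing each new vector against
the older ones through `⟪K x, y⟫ = ⟪x, K* y⟫` and the other recurrence.
-/

open RealInnerProductSpace

theorem Orthonormal.norm_sum_smul {ι E : Type*} [Fintype ι]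
    [NormedAddCommGroup E] [InnerProductSpace ℝ E] {v : ι → E} (hv : Orthonormal ℝ v)
    (c : EuclideanSpace ℝ ι) : ‖∑ i, c i • v i‖ = ‖c‖ := by
  rw [norm_eq_sqrt_real_inner, norm_eq_sqrt_real_inner, hv.inner_sum, PiLp.inner_apply]
  simp [sq]

theorem norm_eq_one_of_smul_eq {E : Type*} [NormedAddCommGroup E] [NormedSpace ℝ E]
    {c : ℝ} {u x : E} (hc : 0 < c) (hnorm : c = ‖x‖) (h : c • u = x) : ‖u‖ = 1 := by
  rw [← h, norm_smul, Real.norm_of_nonneg hc.le] at hnorm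
  exact (mul_eq_left₀ hc.ne').mp hnorm.symm

theorem real_inner_eq_ite_of_lt {E : Type*} [NormedAddCommGroup E] [InnerProductSpace ℝ E]
    {u : ℕ → E} (hu : ∀ j, ‖u j‖ = 1) {m i : ℕ} (horth : ∀ i < m, ⟪u m, u i⟫ = 0)
    (hi : i ≤ m) : ⟪u m, u i⟫ = if i = m then 1 else 0 := by
  rcases hi.eq_or_lt with rfl | hlt
  · simp [hu]
  · simp [horth i hlt, hlt.ne]

theorem orthonormal_nat_of_lt {E : Type*} [NormedAddCommGroup E] [InnerProductSpace ℝ E]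
    {u : ℕ → E} (hu : ∀ j, ‖u j‖ = 1) (horth : ∀ m, ∀ i < m, ⟪u m, u i⟫ = 0) :
    Orthonormal ℝ u := by
  refine ⟨hu, fun i j hij => ?_⟩
  rcases hij.lt_or_gt with h | h
  · rw [real_inner_comm]; exact horth j i h
  · exact horth i j h

theorem Matrix.sum_mulVec_smul {ι ι' R M : Type*} [Fintype ι] [Fintype ι'] [CommSemiring R]
    [AddCommMonoid M] [Module R M] (G : Matrix ι' ι R) (c : ι → R) (u : ι' → M) :
    ∑ i, G.mulVec c i • u i = ∑ j, c j • ∑ i, G i j • u i := by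
  simp only [Matrix.mulVec, dotProduct, Finset.sum_smul, Finset.smul_sum, smul_smul]
  rw [Finset.sum_comm]
  simp only [mul_comm]

namespace GKB

variable {H₁ H₂ : Type*}
    [NormedAddCommGroup H₁] [InnerProductSpace ℝ H₁] [CompleteSpace H₁]
    [NormedAddCommGroup H₂] [InnerProductSpace ℝ H₂] [CompleteSpace H₂]
    {K : H₁ →L[ℝ] H₂} {f : H₂} {γ β : ℕ → ℝ} {v : ℕ → H₂} {p : ℕ → H₁}

theorem norm_v (h : GKB K f γ β v p) (j : ℕ) : ‖v j‖ = 1 := by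
  cases j with
  | zero => exact norm_eq_one_of_smul_eq (h.γ_pos 0) h.γ_zero h.v_zero
  | succ j => exact norm_eq_one_of_smul_eq (h.γ_pos _) (h.γ_succ j) (h.v_succ j)

theorem norm_p (h : GKB K f γ β v p) (j : ℕ) : ‖p j‖ = 1 := by
  cases j with
  | zero => exact norm_eq_one_of_smul_eq (h.β_pos 0) h.β_zero h.p_zero
  | succ j => exact norm_eq_one_of_smul_eq (h.β_pos _) (h.β_succ j) (h.p_succ j)

theorem apply_p (h : GKB K f γ β v p) (j : ℕ) :
    K (p j) = β j • v j + γ (j + 1) • v (j + 1) := by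
  rw [h.v_succ, add_sub_cancel]

theorem adjoint_apply_v_succ (h : GKB K f γ β v p) (j : ℕ) :
    adjoint K (v (j + 1)) = γ (j + 1) • p j + β (j + 1) • p (j + 1) := by
  rw [h.p_succ, add_sub_cancel]

theorem inner_p_adjoint_apply_v (h : GKB K f γ β v p) {m i : ℕ}
    (hp : ∀ i < m, ⟪p m, p i⟫ = 0) (hi : i ≤ m) :
    ⟪p m, adjoint K (v i)⟫ = if i = m then β m else 0 := by
  cases i with
  | zero =>
    rw [← h.p_zero, real_inner_smul_right, real_inner_eq_ite_of_lt h.norm_p hp hi]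
    split_ifs with him <;> simp [him]
  | succ i =>
    rw [h.adjoint_apply_v_succ, inner_add_right, real_inner_smul_right, real_inner_smul_right,
      hp i (by omega), real_inner_eq_ite_of_lt h.norm_p hp hi]
    split_ifs with him <;> simp [him]

theorem inner_v_succ_eq_zero (h : GKB K f γ β v p) {m : ℕ}
    (hv : ∀ i < m, ⟪v m, v i⟫ = 0) (hp : ∀ i < m, ⟪p m, p i⟫ = 0) :
    ∀ i < m + 1, ⟪v (m + 1), v i⟫ = 0 := by
  intro i hi
  -- both `⟪p m, K* v i⟫` and `β m ⟪v m, v i⟫` equal `β m` if `i = m` and vanish otherwise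
  have hscaled : γ (m + 1) * ⟪v (m + 1), v i⟫ = 0 := by
    rw [← real_inner_smul_left, h.v_succ, inner_sub_left, real_inner_smul_left,
      ← adjoint_inner_right, h.inner_p_adjoint_apply_v hp (by omega),
      real_inner_eq_ite_of_lt h.norm_v hv (by omega)]
    split_ifs <;> simp
  exact (mul_eq_zero.mp hscaled).resolve_left (h.γ_pos _).ne'

theorem inner_p_succ_eq_zero (h : GKB K f γ β v p) {m : ℕ}
    (hv : ∀ i < m + 1, ⟪v (m + 1), v i⟫ = 0) (hp : ∀ i < m, ⟪p m, p i⟫ = 0) :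
    ∀ i < m + 1, ⟪p (m + 1), p i⟫ = 0 := by
  intro i hi
  have hscaled : β (m + 1) * ⟪p (m + 1), p i⟫ = 0 := by
    rw [← real_inner_smul_left, h.p_succ, inner_sub_left, real_inner_smul_left,
      adjoint_inner_left, h.apply_p, inner_add_right, real_inner_smul_right,
      real_inner_smul_right, hv i hi, real_inner_eq_ite_of_lt h.norm_v hv (by omega),
      real_inner_eq_ite_of_lt h.norm_p hp (by omega)]
    simp only [Nat.add_right_cancel_iff]
    split_ifs with him <;> simp [him]
  exact (mul_eq_zero.mp hscaled).resolve_left (h.β_pos _).ne'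

theorem inner_eq_zero_of_lt (h : GKB K f γ β v p) (m : ℕ) :
    (∀ i < m, ⟪v m, v i⟫ = 0) ∧ (∀ i < m, ⟪p m, p i⟫ = 0) := by
  induction m with
  | zero => simp
  | succ m ih =>
    have hv := h.inner_v_succ_eq_zero ih.1 ih.2
    exact ⟨hv, h.inner_p_succ_eq_zero hv ih.2⟩

theorem orthonormal_v (h : GKB K f γ β v p) : Orthonormal ℝ v :=
  orthonormal_nat_of_lt h.norm_v fun m => (h.inner_eq_zero_of_lt m).1

theorem sum_bidiagonal_smul_v
    (h : GKB K f γ β v p) {k : ℕ} {G : Matrix (Fin (k + 1)) (Fin k) ℝ}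
    (hG : ∀ (i : Fin (k + 1)) (j : Fin k),
      G i j = if (i : ℕ) = (j : ℕ) then β (j : ℕ)
        else if (i : ℕ) = (j : ℕ) + 1 then γ ((j : ℕ) + 1) else 0) (j : Fin k) :
    ∑ i : Fin (k + 1), G i j • v i = K (p j) := by
  set c : ℕ → ℝ := fun i => if i = j then β j else if i = j + 1 then γ (j + 1) else 0
  have hsplit : ∀ i, c i • v i =
      (if i = j then β j • v j else 0) + (if i = j + 1 then γ (j + 1) • v (j + 1) else 0) := by
    intro i
    simp only [c]
    split_ifs <;> first | omega | simp_all
  simp only [hG]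
  rw [Fin.sum_univ_eq_sum_range (fun i => c i • v i), Finset.sum_congr rfl fun i _ => hsplit i,
    Finset.sum_add_distrib, Finset.sum_ite_eq', Finset.sum_ite_eq', h.apply_p]
  simp [j.isLt]

end GKB

theorem stmt_16_general
    {H₁ H₂ : Type*}
    [NormedAddCommGroup H₁] [InnerProductSpace ℝ H₁] [CompleteSpace H₁]
    [NormedAddCommGroup H₂] [InnerProductSpace ℝ H₂] [CompleteSpace H₂]
    (K : H₁ →L[ℝ] H₂) (f : H₂)
    (γ β : ℕ → ℝ) (v : ℕ → H₂) (p : ℕ → H₁)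
    (hGKB : GKB K f γ β v p)
    (k : ℕ)
    (G : Matrix (Fin (k + 1)) (Fin k) ℝ)
    (hG : ∀ (i : Fin (k + 1)) (j : Fin k),
      G i j = if (i : ℕ) = (j : ℕ) then β (j : ℕ)
        else if (i : ℕ) = (j : ℕ) + 1 then γ ((j : ℕ) + 1) else 0) :
    ∀ lam : EuclideanSpace ℝ (Fin k),
      ‖K (∑ j : Fin k, lam j • p (j : ℕ)) - f‖ =
        ‖Matrix.toEuclideanLin G lam -
          γ 0 • EuclideanSpace.single (0 : Fin (k + 1)) (1 : ℝ)‖ := by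
  intro lam
  have hON := hGKB.orthonormal_v.comp (Fin.val : Fin (k + 1) → ℕ) Fin.val_injective
  have hKx : K (∑ j : Fin k, lam j • p j) = ∑ i : Fin (k + 1), G.mulVec lam i • v i := by
    simp only [Matrix.sum_mulVec_smul, hGKB.sum_bidiagonal_smul_v hG, map_sum, map_smul]
  have hf_expand : f = ∑ i : Fin (k + 1), (γ 0 • EuclideanSpace.single 0 (1 : ℝ)) i • v i := by
    simp [← hGKB.v_zero, PiLp.single_apply]
  rw [← hON.norm_sum_smul, hKx, hf_expand]
  simp [sub_smul, Matrix.ofLp_toLpLin, Matrix.toLin'_apply]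

/-- with `G_k` the `(k+1) × k` lower bidiagonal GKB matrix (indices are
`0`-based: the `0`-based column `j` has `β j` — the paper's `β_{j+1}` — on the diagonal
and `γ (j+1)` — the paper's `γ_{j+2}` — below it) and `e₁` the first standard basis
vector of `ℝ^{k+1}`, for every `λ ∈ ℝ^k` one has
`‖K (Σ_j λ_j p_j) − f‖ = ‖G_k λ − γ₁ e₁‖₂`. -/
theorem stmt_16
    {H₁ H₂ : Type*}
    [NormedAddCommGroup H₁] [InnerProductSpace ℝ H₁] [CompleteSpace H₁]
    [NormedAddCommGroup H₂] [InnerProductSpace ℝ H₂] [CompleteSpace H₂]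
    (K : H₁ →L[ℝ] H₂) (f : H₂) (hf : f ≠ 0)
    (γ β : ℕ → ℝ) (v : ℕ → H₂) (p : ℕ → H₁)
    (hGKB : GKB K f γ β v p)
    (k : ℕ) (hk : 1 ≤ k)
    (G : Matrix (Fin (k + 1)) (Fin k) ℝ)
    (hG : ∀ (i : Fin (k + 1)) (j : Fin k),
      G i j = if (i : ℕ) = (j : ℕ) then β (j : ℕ)
        else if (i : ℕ) = (j : ℕ) + 1 then γ ((j : ℕ) + 1) else 0) :
    ∀ lam : EuclideanSpace ℝ (Fin k),
      ‖K (∑ j : Fin k, lam j • p (j : ℕ)) - f‖ =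
        ‖Matrix.toEuclideanLin G lam -
          γ 0 • EuclideanSpace.single (0 : Fin (k + 1)) (1 : ℝ)‖ :=
  stmt_16_general K f γ β v p hGKB k G hG
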